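/- arXiv:2211.01114 — 3 statements merged into one kernel-verified Lean document; each statement's English description precedes it below -/
import Mathlib

section
/- Let n ≥ 0 be an integer and let p = 12n − 1 be prime. Let c_m = ((−1/12)_m (1/4)_m) / ((2/3)_m · m!) be the m-th coefficient of ₂F₁(−1/12, 1/4; 2/3; x). Then for all m with n < m < 4n, c_m is p-integral and c_m ≡ 0 (mod p). -/
/-- Pochhammer symbol `(x)_m = x(x+1)⋯(x+m−1)`. -/
def poch (x : ℚ) : ℕ → ℚ
  | 0 => 1
  | m + 1 => poch x m * (x + m)

lemma poch_eq (a : ℤ) (b : ℕ) (hb : (b:ℚ) ≠ 0) (m : ℕ) :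
    poch ((a:ℚ)/b) m = ((∏ k ∈ Finset.range m, (a + b*k) : ℤ) : ℚ) / (b:ℚ)^m := by
  induction m with
  | zero => simp [poch]
  | succ m ih =>
      rw [poch, ih, Finset.prod_range_succ]
      push_cast
      field_simp
      ring

theorem stmt_3 (n p : ℕ) [Fact p.Prime]
    (hpn : p = 12 * n - 1)
    (c : ℕ → ℚ)
    (hc : ∀ m, c m = poch (-1/12) m * poch (1/4) m / (poch (2/3) m * m.factorial)) :
    ∀ m, n < m → m < 4 * n → ¬ (p ∣ (c m).den) ∧ ((c m : ZMod p) = 0) := by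
  intro m hm1 hm2
  have hp : p.Prime := Fact.out
  have hp2 : 2 ≤ p := hp.two_le
  have hn1 : 1 ≤ n := by omega
  have hpz : (p:ℤ) = 12*(n:ℤ) - 1 := by push_cast; omega
  have hpq : Prime (p:ℤ) := Nat.prime_iff_prime_int.mp hp
  set P12 : ℤ := ∏ k ∈ Finset.range m, (-1 + 12*k) with hP12
  set P4 : ℤ := ∏ k ∈ Finset.range m, (1 + 4*k) with hP4
  set P3 : ℤ := ∏ k ∈ Finset.range m, (2 + 3*k) with hP3
  set N : ℤ := P12 * P4 * 3^m with hN
  set D : ℤ := P3 * m.factorial * 12^m * 4^m with hD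
  -- positivity of the pieces of D
  have hP3pos : 0 < P3 := Finset.prod_pos (fun k _ => by positivity)
  have hfacpos : (0:ℤ) < (m.factorial : ℤ) := by
    exact_mod_cast m.factorial_pos
  have hDpos : 0 < D := by positivity
  have hDQ : ((D:ℤ):ℚ) ≠ 0 := by exact_mod_cast hDpos.ne'
  -- the explicit formula for c m
  have hcm : c m = (N : ℚ) / (D : ℚ) := by
    have e12 : (-1/12 : ℚ) = ((-1 : ℤ) : ℚ) / ((12:ℕ):ℚ) := by norm_num
    have e4 : (1/4 : ℚ) = ((1 : ℤ) : ℚ) / ((4:ℕ):ℚ) := by norm_num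
    have e3 : (2/3 : ℚ) = ((2 : ℤ) : ℚ) / ((3:ℕ):ℚ) := by norm_num
    rw [hc m, e12, e4, e3, poch_eq _ _ (by norm_num), poch_eq _ _ (by norm_num),
      poch_eq _ _ (by norm_num)]
    have hP3Q : ((P3:ℤ):ℚ) ≠ 0 := by exact_mod_cast hP3pos.ne'
    have hfQ : ((m.factorial : ℕ):ℚ) ≠ 0 := by exact_mod_cast m.factorial_pos.ne'
    rw [hN, hD, hP12, hP4, hP3]
    push_cast
    field_simp
  -- p does not divide D
  have hpD : ¬ (p:ℤ) ∣ D := by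
    intro h
    rw [hD] at h
    rcases (hpq.dvd_mul.mp h) with h | h
    · rcases (hpq.dvd_mul.mp h) with h | h
      · rcases (hpq.dvd_mul.mp h) with h | h
        · -- p ∣ P3
          obtain ⟨k, hk, hdk⟩ := (hpq.dvd_finset_prod_iff _).mp h
          simp only [Finset.mem_range] at hk
          have hle : (p:ℤ) ≤ 2 + 3*k := Int.le_of_dvd (by positivity) hdk
          omega
        · -- p ∣ m!
          have : p ∣ m.factorial := by exact_mod_cast h
          have := (hp.dvd_factorial).mp this
          omega
      · -- p ∣ 12^m
        have h12 : (p:ℤ) ∣ 12 := hpq.dvd_of_dvd_pow h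
        have : (p:ℤ) ≤ 12 := Int.le_of_dvd (by norm_num) h12
        have hp11 : p = 11 := by omega
        rw [hp11] at h12
        norm_num at h12
    · -- p ∣ 4^m
      have h4 : (p:ℤ) ∣ 4 := hpq.dvd_of_dvd_pow h
      have : (p:ℤ) ≤ 4 := Int.le_of_dvd (by norm_num) h4
      omega
  -- p divides N
  have hpN : (p:ℤ) ∣ N := by
    have hmem : n ∈ Finset.range m := Finset.mem_range.mpr hm1
    have : (p:ℤ) ∣ P12 := by
      rw [hP12, show (p:ℤ) = -1 + 12*(n:ℤ) by omega]
      exact Finset.dvd_prod_of_mem (fun k : ℕ => (-1 + 12*(k:ℤ))) hmem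
    exact (this.mul_right _).mul_right _
  -- the denominator of c m divides D
  have hden : ((c m).den : ℤ) ∣ D := by
    rw [hcm, ← Rat.divInt_eq_div]
    exact Rat.den_dvd N D
  have hpden : ¬ p ∣ (c m).den := by
    intro h
    exact hpD (dvd_trans (by exact_mod_cast h) hden)
  refine ⟨hpden, ?_⟩
  -- cross multiplication: num * D = N * den
  have hdenQ : (((c m).den : ℤ):ℚ) ≠ 0 := by
    exact_mod_cast (Nat.cast_pos.mpr (c m).pos).ne'
  have hcross : (c m).num * D = N * ((c m).den : ℤ) := by
    have h1 : ((c m).num : ℚ) / ((c m).den : ℚ) = (N:ℚ) / (D:ℚ) := by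
      rw [Rat.num_div_den, hcm]
    rw [div_eq_div_iff (by exact_mod_cast hdenQ) hDQ] at h1
    exact_mod_cast h1
  have hpnum : (p:ℤ) ∣ (c m).num := by
    have : (p:ℤ) ∣ (c m).num * D := hcross ▸ hpN.mul_right _
    rcases hpq.dvd_mul.mp this with h | h
    · exact h
    · exact absurd h hpD
  rw [Rat.cast_def]
  have h0 : (((c m).num : ℤ) : ZMod p) = 0 :=
    (ZMod.intCast_zmod_eq_zero_iff_dvd _ _).mpr hpnum
  rw [h0, zero_div]
end

section
/- Let n ≥ 0 be an integer and let p = 12n + 5 be prime. Let c_m = ((5/12)_m (3/4)_m) / ((2/3)_m · m!). Then for all m with n < m < 4n + 2, c_m is p-integral and c_m ≡ 0 (mod p). -/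
open Finset in
lemma poch_eq_prod (x : ℚ) (m : ℕ) : poch x m = ∏ k ∈ range m, (x + k) := by
  induction m with
  | zero => simp [poch]
  | succ m ih => rw [poch, ih, prod_range_succ]

open Finset in
lemma prod_shift (a b : ℚ) (m : ℕ) (hb : b ≠ 0) :
    ∏ k ∈ range m, (a / b + k) = (∏ k ∈ range m, (a + b * k)) / b ^ m := by
  rw [show b ^ m = ∏ _k ∈ range m, b by simp, ← Finset.prod_div_distrib]
  exact Finset.prod_congr rfl fun k _ => by field_simp

theorem stmt_4 (n p : ℕ) [Fact p.Prime]
    (hpn : p = 12 * n + 5)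
    (c : ℕ → ℚ)
    (hc : ∀ m, c m = poch (5/12) m * poch (3/4) m / (poch (2/3) m * m.factorial)) :
    ∀ m, n < m → m < 4 * n + 2 → ¬ (p ∣ (c m).den) ∧ ((c m : ZMod p) = 0) := by
  have hp : p.Prime := Fact.out
  intro m hm1 hm2
  set N : ℕ := (∏ k ∈ Finset.range m, (12*k+5)) * ∏ k ∈ Finset.range m, (4*k+3) with hN
  set D : ℕ := 16^m * (∏ k ∈ Finset.range m, (3*k+2)) * m.factorial with hD
  -- key identity
  have hD1pos : (0:ℚ) < ∏ k ∈ Finset.range m, ((3:ℚ)*k+2) :=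
    Finset.prod_pos fun k _ => by positivity
  have key : c m = (N : ℚ) / (D : ℚ) := by
    rw [hc, poch_eq_prod, poch_eq_prod, poch_eq_prod]
    rw [show (5:ℚ)/12 = 5/12 from rfl]
    rw [show ∏ k ∈ Finset.range m, ((5:ℚ)/12 + k)
        = (∏ k ∈ Finset.range m, ((5:ℚ) + 12 * k)) / 12 ^ m from
      prod_shift 5 12 m (by norm_num)]
    rw [show ∏ k ∈ Finset.range m, ((3:ℚ)/4 + k)
        = (∏ k ∈ Finset.range m, ((3:ℚ) + 4 * k)) / 4 ^ m from
      prod_shift 3 4 m (by norm_num)]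
    rw [show ∏ k ∈ Finset.range m, ((2:ℚ)/3 + k)
        = (∏ k ∈ Finset.range m, ((2:ℚ) + 3 * k)) / 3 ^ m from
      prod_shift 2 3 m (by norm_num)]
    have hc1 : (∏ k ∈ Finset.range m, ((2:ℚ) + 3 * k)) ≠ 0 := by
      have : (∏ k ∈ Finset.range m, ((2:ℚ) + 3 * k))
          = ∏ k ∈ Finset.range m, ((3:ℚ)*k+2) := by
        exact Finset.prod_congr rfl fun k _ => by ring
      rw [this]; exact ne_of_gt hD1pos
    have hfac : ((m.factorial : ℚ)) ≠ 0 := by positivity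
    have hN' : ((N:ℚ)) = (∏ k ∈ Finset.range m, ((5:ℚ) + 12 * k)) *
        ∏ k ∈ Finset.range m, ((3:ℚ) + 4 * k) := by
      rw [hN]; push_cast; congr 1 <;> exact Finset.prod_congr rfl fun k _ => by ring
    have hD' : ((D:ℚ)) = 16^m * (∏ k ∈ Finset.range m, ((2:ℚ) + 3 * k)) * m.factorial := by
      rw [hD]; push_cast; congr 2; exact Finset.prod_congr rfl fun k _ => by ring
    rw [hN', hD']
    have h48 : (12:ℚ)^m * 4^m = 16^m * 3^m := by
      rw [← mul_pow, ← mul_pow]; norm_num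
    field_simp
    ring_nf
    rw [show (4:ℚ)^m * 12^m = 16^m * 3^m from by rw [← mul_pow, ← mul_pow]; norm_num]
    ring
  have hDne : (D:ℚ) ≠ 0 := by
    have : 0 < D := by
      rw [hD]
      exact Nat.mul_pos (Nat.mul_pos (pow_pos (by norm_num) m)
        (Finset.prod_pos fun k _ => by omega)) m.factorial_pos
    exact_mod_cast this.ne'
  -- p does not divide D
  have hpD : ¬ p ∣ D := by
    rw [hD]
    intro h
    rcases (Nat.Prime.dvd_mul hp).mp h with h | h
    · rcases (Nat.Prime.dvd_mul hp).mp h with h | h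
      · have h2 : p ∣ 16 := hp.dvd_of_dvd_pow h
        have := Nat.le_of_dvd (by norm_num) h2
        have h16 : (16:ℕ) = 2^4 := by norm_num
        rw [h16] at h2
        have := hp.dvd_of_dvd_pow h2
        have := Nat.le_of_dvd (by norm_num) this
        omega
      · obtain ⟨k, hk, hdvd⟩ := (Prime.dvd_finset_prod_iff hp.prime _).mp h
        have hk' : k < m := Finset.mem_range.mp hk
        have := Nat.le_of_dvd (by omega) hdvd
        omega
    · rw [Nat.Prime.dvd_factorial hp] at h
      omega
  -- p divides N
  have hpN : p ∣ N := by
    rw [hN]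
    have hn : n ∈ Finset.range m := Finset.mem_range.mpr hm1
    have h5 : p ∣ ∏ k ∈ Finset.range m, (12*k+5) := by
      have := Finset.dvd_prod_of_mem (fun k => 12*k+5) hn
      rw [hpn]
      exact this
    exact h5.mul_right _
  -- denominator divides D
  have hden : ((c m).den : ℤ) ∣ (D : ℤ) := by
    have : c m = ((N:ℤ) : ℚ) / ((D:ℤ) : ℚ) := by rw [key]; push_cast; ring
    rw [this, ← Rat.divInt_eq_div]
    exact Rat.den_dvd _ _
  have hdenN : ¬ p ∣ (c m).den := by
    intro h
    have h1 : (p:ℤ) ∣ ((c m).den : ℤ) := Int.natCast_dvd_natCast.mpr h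
    have h2 : (p:ℤ) ∣ (D:ℤ) := h1.trans hden
    exact hpD (Int.natCast_dvd_natCast.mp h2)
  -- p divides numerator
  have hnum : (p:ℤ) ∣ (c m).num := by
    have hq : ((c m).num : ℚ) * D = (N:ℚ) * ((c m).den : ℚ) := by
      have hd : ((c m).den : ℚ) ≠ 0 := by
        exact_mod_cast (c m).den_nz
      have h1 : ((c m).num : ℚ) = c m * ((c m).den : ℚ) :=
        (div_eq_iff hd).mp (Rat.num_div_den (c m))
      rw [h1, key]
      field_simp
    have hz : ((c m).num) * (D:ℤ) = (N:ℤ) * ((c m).den : ℤ) := by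
      exact_mod_cast hq
    have hpz : Prime (p:ℤ) := Nat.prime_iff_prime_int.mp hp
    have : (p:ℤ) ∣ (c m).num * (D:ℤ) := by
      rw [hz]
      exact Dvd.dvd.mul_right (Int.natCast_dvd_natCast.mpr hpN) _
    rcases hpz.dvd_mul.mp this with h | h
    · exact h
    · exact absurd (Int.natCast_dvd_natCast.mp h) hpD
  refine ⟨hdenN, ?_⟩
  rw [Rat.cast_def]
  have : (((c m).num : ℤ) : ZMod p) = 0 := by
    rwa [ZMod.intCast_zmod_eq_zero_iff_dvd]
  rw [this, zero_div]
end

section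
/- Let p ≥ 7 be a prime with p ≡ 3 (mod 4). Regard G_p(λ) = Σ_{m=0}^{(p+1)/4} ((−1/4)_m (1/4)_m)/((1/2)_m m!) λ^m as a polynomial in 𝔽_p[λ]. Then G_p(λ) = ∏_{t} (λ − t), where the product ranges over all t ∈ 𝔽_p such that t − 1 is a nonzero square in 𝔽_p and t is a nonsquare in 𝔽_p. In particular, G_p splits into distinct linear factors over 𝔽_p. -/
open Polynomial

open Finset


lemma ratCast_helper (p : ℕ) [Fact p.Prime] (q : ℚ) (a : ℤ) (b : ℕ)
    (hb : (b : ZMod p) ≠ 0) (h : q * (b : ℚ) = (a : ℚ)) :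
    (q : ZMod p) * (b : ZMod p) = (a : ZMod p) := by
  have hb0 : (b : ℚ) ≠ 0 := by
    intro h0
    rw [Nat.cast_eq_zero] at h0
    simp [h0] at hb
  have hden : q.den ∣ b := by
    have hq : q = (a : ℚ) / (b : ℚ) := by field_simp at h ⊢; linarith [h]
    have := Rat.den_dvd a (b : ℤ)
    rw [Rat.divInt_eq_div, Int.cast_natCast, ← hq] at this
    exact_mod_cast this
  have hnum : q.num * b = a * q.den := by
    have h1 : (q.num : ℚ) = q * q.den := (Rat.mul_den_eq_num q).symm
    have : ((q.num * b : ℤ) : ℚ) = ((a * q.den : ℤ) : ℚ) := by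
      push_cast
      rw [h1, mul_comm q (q.den : ℚ), mul_assoc, h]
      ring
    exact_mod_cast this
  have hdenp : ((q.den : ℕ) : ZMod p) ≠ 0 := by
    intro h0
    apply hb
    rw [ZMod.natCast_eq_zero_iff] at h0 ⊢
    exact h0.trans hden
  rw [Rat.cast_def, div_mul_eq_mul_div, div_eq_iff hdenp]
  have : ((q.num * b : ℤ) : ZMod p) = ((a * q.den : ℤ) : ZMod p) := by
    exact_mod_cast congrArg _ hnum
  push_cast at this ⊢
  exact this



lemma poch_pos {x : ℚ} (hx : 0 < x) (m : ℕ) : 0 < poch x m := by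
  induction m with
  | zero => norm_num [poch]
  | succ m ih => exact mul_pos ih (by positivity)

lemma poch_half (m : ℕ) : poch (1/2) m * (4 ^ m * (m.factorial : ℚ)) = (2 * m).factorial := by
  induction m with
  | zero => simp [poch]
  | succ m ih =>
    have h2 : 2 * (m + 1) = (2 * m) + 1 + 1 := by ring
    rw [poch, h2, Nat.factorial_succ, Nat.factorial_succ, Nat.factorial_succ]
    push_cast
    ring_nf
    ring_nf at ih
    linear_combination (4 * (1/2 + (m : ℚ)) * ((m : ℚ) + 1)) * ih

lemma poch_quarters (m : ℕ) :
    poch (-1/4) m * poch (1/4) m * 16 ^ m = ∏ j ∈ Finset.range m, (16 * (j : ℚ) ^ 2 - 1) := by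
  induction m with
  | zero => simp [poch]
  | succ m ih =>
    rw [poch, poch, Finset.prod_range_succ, ← ih]
    push_cast
    ring

lemma c_formula (c : ℕ → ℚ)
    (hc : ∀ m, c m = poch (-1/4) m * poch (1/4) m / (poch (1/2) m * m.factorial)) (m : ℕ) :
    c m * ((4 ^ m * (2 * m).factorial : ℕ) : ℚ) = ∏ j ∈ Finset.range m, (16 * (j : ℚ) ^ 2 - 1) := by
  have hph := poch_half m
  have hpq := poch_quarters m
  have h1 : poch (1/2) m ≠ 0 := ne_of_gt (poch_pos (by norm_num) m)
  have h2 : (m.factorial : ℚ) ≠ 0 := by exact_mod_cast m.factorial_ne_zero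
  have hne : poch (1/2) m * (m.factorial : ℚ) ≠ 0 := mul_ne_zero h1 h2
  rw [hc, div_mul_eq_mul_div, div_eq_iff hne]
  have h16 : (16:ℚ)^m = 4^(m*2) := by rw [show (16:ℚ) = 4^2 by norm_num, ← pow_mul, mul_comm]
  push_cast
  linear_combination (-(poch (-1/4) m * poch (1/4) m * 4 ^ m)) * hph
    + (poch (1/2) m * (m.factorial : ℚ)) * hpq
    - (poch (-1/4) m * poch (1/4) m * poch (1/2) m * (m.factorial:ℚ)) * h16


lemma key_b (p N : ℕ) [Fact p.Prime] (hpN : p + 1 = 4 * N) :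
    ∀ m, m ≤ N → ((∏ j ∈ Finset.range m, (16 * (j:ℤ)^2 - 1) : ℤ) : ZMod p)
      = ((4 ^ m * (2*m).factorial : ℕ) : ZMod p) * ((2*N).choose (2*m) : ZMod p) := by
  have hone : ((4 * N : ℕ) : ZMod p) = 1 := by
    rw [← hpN]; push_cast [ZMod.natCast_self]; ring
  intro m
  induction m with
  | zero => simp
  | succ m ih =>
    intro hm
    have hmN : m ≤ N := by omega
    have ih' := ih hmN
    have hc1 := Nat.choose_succ_right_eq (2*N) (2*m)
    have hc2 := Nat.choose_succ_right_eq (2*N) (2*m+1)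
    -- cast them
    have hs1 : 2*N - 2*m = (2*N - 2*m : ℕ) := rfl
    have hle1 : 2*m ≤ 2*N := by omega
    have hle2 : 2*m+1 ≤ 2*N := by omega
    have hc1' : ((2*N).choose (2*m+1) : ZMod p) * (2*m+1 : ℕ) =
        ((2*N).choose (2*m) : ZMod p) * ((2*N : ℕ) - (2*m : ℕ) : ZMod p) := by
      have := congrArg (fun n : ℕ => (n : ZMod p)) hc1
      push_cast [Nat.cast_sub hle1] at this
      push_cast
      linear_combination this
    have hc2' : ((2*N).choose (2*m+2) : ZMod p) * (2*m+2 : ℕ) =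
        ((2*N).choose (2*m+1) : ZMod p) * ((2*N : ℕ) - (2*m+1 : ℕ) : ZMod p) := by
      have := congrArg (fun n : ℕ => (n : ZMod p)) hc2
      push_cast [Nat.cast_sub hle2] at this
      push_cast
      linear_combination this
    rw [Finset.prod_range_succ]
    push_cast
    push_cast at ih' hone hc1' hc2'
    have h2m2 : 2*(m+1) = 2*m+2 := by ring
    rw [h2m2]
    -- factorial expansion
    have hf : ((2*m+2).factorial : ZMod p) = ((2*m).factorial : ZMod p) * (2*m+1) * (2*m+2) := by
      rw [show 2*m+2 = (2*m+1)+1 from rfl, Nat.factorial_succ, Nat.factorial_succ]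
      push_cast
      ring
    rw [hf]
    -- now pure algebra
    set x : ZMod p := (m : ZMod p)
    set n : ZMod p := (N : ZMod p)
    set C0 : ZMod p := ((2*N).choose (2*m) : ZMod p)
    set C1 : ZMod p := ((2*N).choose (2*m+1) : ZMod p)
    set C2 : ZMod p := ((2*N).choose (2*m+2) : ZMod p)
    set F : ZMod p := ((2*m).factorial : ZMod p)
    linear_combination (16 * x^2 - 1) * ih'
      - (4 * 4^m * F * (2*n - 2*x - 1)) * hc1'
      - (4 * 4^m * F * (2*x+1)) * hc2'
      + (4^m * F * C0 * (8*x - 4*n + 1)) * hone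


lemma evenpart (R : Type*) [CommRing R] (n : ℕ) :
    ((1 + X) ^ (2*n) + (1 - X) ^ (2*n) : R[X])
      = C 2 * ∑ m ∈ range (n+1), C (((2*n).choose (2*m) : R)) * X ^ (2*m) := by
  have h1 : ((1 + X : R[X])) ^ (2*n) = ∑ k ∈ range (2*n+1), C (((2*n).choose k : R)) * X ^ k := by
    rw [add_comm, add_pow]
    refine Finset.sum_congr rfl fun k hk => ?_
    rw [one_pow, mul_one, mul_comm (X ^ k : R[X]) _]
    norm_cast
  have h2 : ((1 - X : R[X])) ^ (2*n)
      = ∑ k ∈ range (2*n+1), C ((-1)^k * ((2*n).choose k : R)) * X ^ k := by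
    have h0 : (1 - X : R[X]) = (-X) + 1 := by ring
    rw [h0, add_pow]
    refine Finset.sum_congr rfl fun k hk => ?_
    rw [one_pow, mul_one, neg_pow, map_mul, map_pow, map_neg, map_one]
    simp only [Polynomial.C_eq_natCast]
    ring
  rw [h1, h2, ← Finset.sum_add_distrib]
  have h3 : ∀ k ∈ range (2*n+1),
      (C (((2*n).choose k : R)) * X ^ k + C ((-1)^k * ((2*n).choose k : R)) * X ^ k)
        = (if Even k then C (2 * ((2*n).choose k : R)) * X ^ k else 0) := by
    intro k hk
    by_cases h : Even k
    · rw [if_pos h, h.neg_one_pow, ← add_mul, ← map_add]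
      ring_nf
    · rw [if_neg h, (Nat.odd_iff.mpr (Nat.not_even_iff.mp h)).neg_one_pow, ← add_mul, ← map_add]
      ring_nf
      simp
  rw [Finset.sum_congr rfl h3, ← Finset.sum_filter, Finset.mul_sum]
  refine Finset.sum_nbij' (fun k => k / 2) (fun m => 2 * m) ?_ ?_ ?_ ?_ ?_
  · intro a ha
    simp only [Finset.mem_filter, Finset.mem_range] at ha ⊢
    omega
  · intro a ha
    simp only [Finset.mem_filter, Finset.mem_range] at ha ⊢
    constructor
    · omega
    · exact even_two_mul a
  · intro a ha
    simp only [Finset.mem_filter, Finset.mem_range] at ha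
    obtain ⟨h1, k, hk⟩ := ha
    show 2 * (a / 2) = a
    omega
  · intro a ha
    show (2 * a) / 2 = a
    omega
  · intro a ha
    simp only [Finset.mem_filter, Finset.mem_range] at ha
    obtain ⟨ha1, k, hk⟩ := ha
    have : 2 * (a / 2) = a := by omega
    rw [this, map_mul]
    ring


lemma keydvd (p N : ℕ) [hp : Fact p.Prime] (hp7 : 7 ≤ p) (hpN : p + 1 = 4 * N)
    (t : ZMod p) (h1 : ¬ IsSquare t) (h2 : t - 1 ≠ 0) (h3 : IsSquare (t - 1)) :
    (X ^ 2 - C t) ∣ ((1 + X) ^ (2*N) + (1 - X) ^ (2*N) : (ZMod p)[X]) := by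
  have hprime := hp.out
  have hp2 : p ≠ 2 := by omega
  have hpodd : p % 2 = 1 := Nat.odd_iff.mp (hprime.odd_of_ne_two hp2)
  have hp4 : p % 4 = 3 := by omega
  have hchar : ringChar (ZMod p) ≠ 2 := by
    rw [ZMod.ringChar_zmod_n]; exact hp2
  have ht0 : t ≠ 0 := fun h => h1 (h ▸ ⟨0, by ring⟩)
  -- Euler criterion values
  have hcard : Fintype.card (ZMod p) = p := ZMod.card p
  have hEt : t ^ (p / 2) = -1 := by
    have hd := FiniteField.pow_dichotomy hchar ht0
    rw [hcard] at hd
    rcases hd with h | h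
    · exfalso
      apply h1
      rw [FiniteField.isSquare_iff hchar ht0, hcard]
      exact h
    · exact h
  have h1t0 : (1 : ZMod p) - t ≠ 0 := fun h => h2 (by linear_combination -h)
  have hns1t : ¬ IsSquare ((1:ZMod p) - t) := by
    intro hsq
    obtain ⟨s, hs⟩ := hsq
    obtain ⟨r, hr⟩ := h3
    have hr0 : r ≠ 0 := fun h => h2 (by rw [hr, h]; ring)
    have : IsSquare (-1 : ZMod p) := by
      refine ⟨s * r⁻¹, ?_⟩
      field_simp
      linear_combination hs + hr
    rw [ZMod.exists_sq_eq_neg_one_iff] at this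
    exact this (by omega)
  have hE1t : ((1:ZMod p) - t) ^ (p / 2) = -1 := by
    have hd := FiniteField.pow_dichotomy hchar h1t0
    rw [hcard] at hd
    rcases hd with h | h
    · exfalso
      apply hns1t
      rw [FiniteField.isSquare_iff hchar h1t0, hcard]
      exact h
    · exact h
  -- the quadratic is irreducible
  have hirr : Irreducible (X ^ 2 - C t : (ZMod p)[X]) := by
    apply X_pow_sub_C_irreducible_of_prime Nat.prime_two
    intro b hb
    exact h1 ⟨b, by rw [← hb]; ring⟩
  haveI : Fact (Irreducible (X ^ 2 - C t : (ZMod p)[X])) := ⟨hirr⟩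
  set K := AdjoinRoot (X ^ 2 - C t : (ZMod p)[X])
  haveI : CharP K p := (Algebra.charP_iff (ZMod p) K p).mp (by infer_instance)
  set φ := algebraMap (ZMod p) K
  set w : K := AdjoinRoot.root (X ^ 2 - C t)
  have hw2 : w ^ 2 = φ t := by
    have := AdjoinRoot.eval₂_root (X ^ 2 - C t : (ZMod p)[X])
    simp [sub_eq_zero] at this
    rw [← AdjoinRoot.algebraMap_eq] at this
    exact this
  have hpsplit : 2 * (p / 2) + 1 = p := by omega
  have hwp : w ^ p = - w := by
    calc w ^ p = (w ^ 2) ^ (p / 2) * w := by rw [← pow_mul, ← pow_succ, hpsplit]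
    _ = φ (t ^ (p / 2)) * w := by rw [hw2, map_pow]
    _ = - w := by rw [hEt, map_neg, map_one, neg_one_mul]
  have hab : (1 + w) ^ p = 1 - w := by
    rw [add_pow_char, one_pow, hwp]; ring
  set u : K := (1 + w) ^ (2 * N) with hu
  have hu2 : u ^ 2 = φ (1 - t) := by
    calc u ^ 2 = (1 + w) ^ (p + 1) := by rw [← pow_mul, hpN]; ring_nf
    _ = (1 + w) ^ p * (1 + w) := by rw [pow_succ]
    _ = (1 - w) * (1 + w) := by rw [hab]
    _ = 1 - w ^ 2 := by ring
    _ = φ (1 - t) := by rw [hw2, map_sub, map_one]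
  have h1w : (1 - w) ^ (2 * N) = u ^ p := by
    rw [← hab, ← pow_mul, ← pow_mul, mul_comm p (2*N)]
  clear_value u
  have hup : u ^ p = - u := by
    calc u ^ p = (u ^ 2) ^ (p / 2) * u := by rw [← pow_mul, ← pow_succ, hpsplit]
    _ = φ ((1 - t) ^ (p / 2)) * u := by rw [hu2, map_pow]
    _ = - u := by rw [hE1t, map_neg, map_one, neg_one_mul]
  -- evaluate the polynomial at w
  have heval : (Polynomial.aeval w) ((1 + X) ^ (2*N) + (1 - X) ^ (2*N) : (ZMod p)[X]) = 0 := by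
    simp only [map_add, map_pow, map_sub, map_one, Polynomial.aeval_X, Polynomial.aeval_one]
    rw [h1w, hup, hu]
    ring
  have hmin : (X ^ 2 - C t : (ZMod p)[X]) = minpoly (ZMod p) w := by
    apply minpoly.eq_of_irreducible_of_monic hirr
    · have := AdjoinRoot.eval₂_root (X ^ 2 - C t : (ZMod p)[X])
      rw [map_sub, map_pow, aeval_X, aeval_C, hw2]
      exact sub_self _
    · exact monic_X_pow_sub_C t two_ne_zero
  rw [hmin]
  exact minpoly.dvd (ZMod p) w heval


open scoped Classical in
lemma count_S (p N : ℕ) [hp : Fact p.Prime] (hp7 : 7 ≤ p) (hpN : p + 1 = 4 * N) :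
    (Finset.univ.filter
      (fun t : ZMod p => ¬ IsSquare t ∧ t - 1 ≠ 0 ∧ IsSquare (t - 1))).card = N := by
  have hprime := hp.out
  have hp2 : p ≠ 2 := by omega
  have hpodd : p % 2 = 1 := Nat.odd_iff.mp (hprime.odd_of_ne_two hp2)
  have hp4 : p % 4 = 3 := by omega
  have hchar : ringChar (ZMod p) ≠ 2 := by rw [ZMod.ringChar_zmod_n]; exact hp2
  set χ : MulChar (ZMod p) ℤ := quadraticChar (ZMod p) with hχ
  have hχ0 : χ 0 = 0 := quadraticChar_zero
  have hχ1 : χ 1 = 1 := map_one χ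
  have hχm1 : χ (-1) = -1 := by
    rw [hχ, quadraticChar_neg_one_iff_not_isSquare, ZMod.exists_sq_eq_neg_one_iff]
    simp [hp4]
  have hvals : ∀ a : ZMod p, a ≠ 0 → χ a = 1 ∨ χ a = -1 := fun a ha =>
    quadraticChar_dichotomy ha
  -- sum of chi is zero
  have hsum : ∑ a : ZMod p, χ a = 0 := quadraticChar_sum_zero hchar
  have hshift : ∑ a : ZMod p, χ (a - 1) = 0 := by
    rw [← hsum]
    exact Fintype.sum_equiv (Equiv.subRight (1 : ZMod p)) _ _ (fun a => rfl)
  -- Jacobi-type sum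
  have hJ : ∑ a : ZMod p, χ a * χ (a - 1) = -1 := by
    have h1 : ∑ a : ZMod p, χ a * χ (a - 1) = ∑ a ∈ univ.erase (0 : ZMod p), χ a * χ (a - 1) := by
      rw [Finset.sum_erase]
      simp [hχ0]
    have h2 : ∀ a ∈ univ.erase (0 : ZMod p), χ a * χ (a - 1) = χ (1 - a⁻¹) := by
      intro a ha
      have ha0 : a ≠ 0 := (Finset.mem_erase.mp ha).1
      have : a - 1 = a * (1 - a⁻¹) := by field_simp
      rw [this, map_mul, ← mul_assoc, ← map_mul, ← sq]
      rw [quadraticChar_sq_one' ha0, one_mul]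
    rw [h1, Finset.sum_congr rfl h2]
    have h3 : ∑ a ∈ univ.erase (0 : ZMod p), χ (1 - a⁻¹)
        = ∑ b ∈ univ.erase (1 : ZMod p), χ b := by
      refine Finset.sum_nbij' (fun a => 1 - a⁻¹) (fun b => (1 - b)⁻¹) ?_ ?_ ?_ ?_ ?_
      · intro a ha
        simp only [Finset.mem_erase, Finset.mem_univ, and_true] at ha ⊢
        intro h
        apply ha
        have : a⁻¹ = 0 := by linear_combination -h
        simpa using this
      · intro b hb
        simp only [Finset.mem_erase, Finset.mem_univ, and_true] at hb ⊢
        intro h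
        apply hb
        rw [inv_eq_zero] at h
        linear_combination -h
      · intro a ha
        simp only [Finset.mem_erase, Finset.mem_univ, and_true] at ha
        show (1 - (1 - a⁻¹))⁻¹ = a
        simp [ha]
      · intro b hb
        simp only [Finset.mem_erase, Finset.mem_univ, and_true] at hb
        show 1 - ((1 - b)⁻¹)⁻¹ = b
        have : (1 : ZMod p) - b ≠ 0 := fun h => hb (by linear_combination -h)
        rw [inv_inv]
        ring
      · intro a ha; rfl
    rw [h3, Finset.sum_erase_eq_sub (Finset.mem_univ _), hsum, hχ1]
    ring
  -- now the count
  set S := Finset.univ.filter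
      (fun t : ZMod p => ¬ IsSquare t ∧ t - 1 ≠ 0 ∧ IsSquare (t - 1)) with hS
  set term : ZMod p → ℤ := fun t => (1 - χ t) * (1 + χ (t - 1)) with hterm
  have hsum_univ : ∑ t : ZMod p, term t = p + 1 := by
    have hexp : ∀ t ∈ (univ : Finset (ZMod p)),
        term t = 1 - χ t + χ (t-1) - χ t * χ (t-1) := by
      intro t _
      rw [hterm]
      ring
    rw [Finset.sum_congr rfl hexp]
    rw [Finset.sum_sub_distrib, Finset.sum_add_distrib, Finset.sum_sub_distrib]
    rw [hsum, hshift, hJ, Finset.sum_const, Finset.card_univ, ZMod.card]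
    push_cast
    ring
  have hvanish : ∀ t ∈ (univ : Finset (ZMod p)), t ∉ S → term t = 0 := by
    intro t _ htS
    rw [hS, Finset.mem_filter] at htS
    push_neg at htS
    have htS' := htS (Finset.mem_univ t)
    by_cases ht0 : t = 0
    · rw [hterm]; simp [ht0, hχ0, hχm1]
    by_cases ht1 : t = 1
    · rw [hterm]; simp [ht1, hχ0, hχ1]
    have ht10 : t - 1 ≠ 0 := fun h => ht1 (by linear_combination h)
    by_cases hsq : IsSquare t
    · have : χ t = 1 := (quadraticChar_one_iff_isSquare ht0).mpr hsq
      rw [hterm]; simp [this]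
    · have hnsq1 : ¬ IsSquare (t - 1) := fun h => (htS' hsq ht10) h
      have : χ (t - 1) = -1 := quadraticChar_neg_one_iff_not_isSquare.mpr hnsq1
      rw [hterm]
      simp [this]
  have hsum_S : ∑ t ∈ S, term t = ∑ t : ZMod p, term t :=
    Finset.sum_subset (Finset.subset_univ S) hvanish
  have hfour : ∀ t ∈ S, term t = 4 := by
    intro t htS
    rw [hS, Finset.mem_filter] at htS
    obtain ⟨-, hnsq, ht10, hsq1⟩ := htS
    have h1 : χ t = -1 := quadraticChar_neg_one_iff_not_isSquare.mpr hnsq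
    have h2 : χ (t - 1) = 1 := (quadraticChar_one_iff_isSquare ht10).mpr hsq1
    rw [hterm]
    simp [h1, h2]
  have : (S.card : ℤ) * 4 = p + 1 := by
    have := (Finset.sum_congr rfl hfour) ▸ hsum_S
    rw [Finset.sum_const, nsmul_eq_mul] at this
    linarith [this.symm ▸ hsum_univ]
  have hfin : (S.card : ℤ) * 4 = 4 * N := by rw [this]; exact_mod_cast congrArg (fun n : ℕ => (n:ℤ)) hpN
  have : S.card = N := by
    have := hfin
    omega
  exact this

lemma coeff_eq (p N : ℕ) [Fact p.Prime] (hp7 : 7 ≤ p) (hpN : p + 1 = 4 * N)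
    (c : ℕ → ℚ)
    (hc : ∀ m, c m = poch (-1/4) m * poch (1/4) m / (poch (1/2) m * m.factorial))
    (m : ℕ) (hm : m ≤ N) :
    ((c m : ℚ) : ZMod p) = ((2*N).choose (2*m) : ZMod p) := by
  have hprime := (Fact.out : p.Prime)
  have h2N : 2 * N < p := by omega
  have hb : ((4 ^ m * (2*m).factorial : ℕ) : ZMod p) ≠ 0 := by
    rw [Ne, ZMod.natCast_eq_zero_iff]
    intro hdvd
    rcases (Nat.Prime.dvd_mul hprime).mp hdvd with h | h
    · have := Nat.le_of_dvd (by norm_num) (hprime.dvd_of_dvd_pow h)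
      omega
    · have := (Nat.Prime.dvd_factorial hprime).mp h
      omega
  have hq : c m * (((4 ^ m * (2*m).factorial : ℕ) : ℚ))
      = ((∏ j ∈ Finset.range m, (16 * (j:ℤ)^2 - 1) : ℤ) : ℚ) := by
    rw [c_formula c hc m]
    push_cast
    rfl
  have h1 := ratCast_helper p (c m) _ _ hb hq
  rw [key_b p N hpN m hm] at h1
  exact mul_right_cancel₀ hb (h1.trans (mul_comm _ _))

open scoped Classical in
/-- For a prime `p ≥ 7` with `p ≡ 3 (mod 4)` (i.e. `p + 1 = 4N`), the truncated hypergeometric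
polynomial `G_p(λ)`, viewed in `𝔽_p[λ]`, equals the product of `(λ − t)` over all `t ∈ 𝔽_p`
which are nonsquares such that `t − 1` is a nonzero square. -/
theorem stmt_6 (p N : ℕ) [Fact p.Prime] (hp : 7 ≤ p) (hpN : p + 1 = 4 * N)
    (c : ℕ → ℚ)
    (hc : ∀ m, c m = poch (-1/4) m * poch (1/4) m / (poch (1/2) m * m.factorial)) :
    (∑ m ∈ Finset.range (N + 1), C ((c m : ZMod p)) * X ^ m) =
      ∏ t ∈ Finset.univ.filter
        (fun t : ZMod p => ¬ IsSquare t ∧ t - 1 ≠ 0 ∧ IsSquare (t - 1)),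
        (X - C t) := by
  have hprime := (Fact.out : p.Prime)
  have hp2 : (2 : ZMod p) ≠ 0 := by
    rw [show (2 : ZMod p) = ((2:ℕ) : ZMod p) by norm_num, Ne,
      ZMod.natCast_eq_zero_iff]
    intro h
    have := Nat.le_of_dvd (by norm_num) h
    omega
  -- names
  set S := Finset.univ.filter
      (fun t : ZMod p => ¬ IsSquare t ∧ t - 1 ≠ 0 ∧ IsSquare (t - 1)) with hSdef
  have hcard : S.card = N := count_S p N hp hpN
  set G : (ZMod p)[X] := ∑ m ∈ Finset.range (N + 1),
      C (((2*N).choose (2*m) : ZMod p)) * X ^ m with hGdef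
  set P : (ZMod p)[X] := ∏ t ∈ S, (X - C t) with hPdef
  set H2 : (ZMod p)[X] := (1 + X) ^ (2*N) + (1 - X) ^ (2*N) with hH2def
  set PP : (ZMod p)[X] := ∏ t ∈ S, (X ^ 2 - C t) with hPPdef
  -- LHS = G
  have hLHS : (∑ m ∈ Finset.range (N + 1), C ((c m : ZMod p)) * X ^ m) = G := by
    refine Finset.sum_congr rfl fun m hm => ?_
    rw [coeff_eq p N hp hpN c hc m (Nat.lt_succ_iff.mp (Finset.mem_range.mp hm))]
  rw [hLHS]
  -- PP divides H2
  have hdvd : PP ∣ H2 := by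
    rw [hPPdef]
    apply Finset.prod_dvd_of_coprime
    · intro t ht s hs hts
      have h : (t : ZMod p) - s ≠ 0 := sub_ne_zero.mpr hts
      refine ⟨-C ((t - s)⁻¹), C ((t - s)⁻¹), ?_⟩
      have h1 : (-C ((t - s)⁻¹)) * (X^2 - C t) + C ((t - s)⁻¹) * (X^2 - C s)
          = C ((t - s)⁻¹) * C (t - s) := by
        rw [map_sub]
        ring
      show (-C ((t - s)⁻¹)) * (X^2 - C t) + C ((t - s)⁻¹) * (X^2 - C s) = 1
      rw [h1, ← map_mul, inv_mul_cancel₀ h, map_one]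
    · intro t ht
      rw [hSdef, Finset.mem_filter] at ht
      exact keydvd p N hp hpN t ht.2.1 ht.2.2.1 ht.2.2.2
  -- PP is monic of degree 2N
  have hmonicPP : PP.Monic := by
    rw [hPPdef]
    exact monic_prod_of_monic _ _ fun t ht => monic_X_pow_sub_C t two_ne_zero
  have hdegPP : PP.natDegree = 2 * N := by
    rw [hPPdef, natDegree_prod _ _
      (fun t ht => (monic_X_pow_sub_C t two_ne_zero).ne_zero)]
    rw [Finset.sum_congr rfl (fun t (ht : t ∈ S) => natDegree_X_pow_sub_C (n := 2) (r := t))]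
    rw [Finset.sum_const, hcard]
    ring
  -- H2 degree and top coefficient
  have hswap : ((1 - X : (ZMod p)[X])) ^ (2*N) = (X - 1) ^ (2*N) := by
    rw [show (1 - X : (ZMod p)[X]) = -(X - 1) by ring, neg_pow,
      Even.neg_one_pow ⟨N, by ring⟩, one_mul]
  have hm1 : ((1 + X : (ZMod p)[X]) ^ (2*N)).Monic := by
    have := (monic_X_add_C (1 : ZMod p)).pow (2*N)
    simpa [add_comm] using this
  have hm2 : ((1 - X : (ZMod p)[X]) ^ (2*N)).Monic := by
    rw [hswap]
    have := (monic_X_sub_C (1 : ZMod p)).pow (2*N)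
    simpa using this
  have hd1 : ((1 + X : (ZMod p)[X]) ^ (2*N)).natDegree = 2*N := by
    rw [natDegree_pow]
    have : (1 + X : (ZMod p)[X]) = X + C 1 := by rw [map_one]; ring
    rw [this, natDegree_X_add_C, mul_one]
  have hd2 : ((1 - X : (ZMod p)[X]) ^ (2*N)).natDegree = 2*N := by
    rw [hswap, natDegree_pow]
    have : (X - 1 : (ZMod p)[X]) = X - C 1 := by rw [map_one]
    rw [this, natDegree_X_sub_C, mul_one]
  have hcoeff2N : H2.coeff (2*N) = 2 := by
    rw [hH2def, coeff_add]
    have e1 : ((1 + X : (ZMod p)[X]) ^ (2*N)).coeff (2*N) = 1 := by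
      have := hm1.coeff_natDegree
      rwa [hd1] at this
    have e2 : ((1 - X : (ZMod p)[X]) ^ (2*N)).coeff (2*N) = 1 := by
      have := hm2.coeff_natDegree
      rwa [hd2] at this
    rw [e1, e2]
    norm_num
  have hH2ne : H2 ≠ 0 := fun h => hp2 (by rw [← hcoeff2N, h, coeff_zero])
  have hdegH2 : H2.natDegree = 2*N := by
    refine le_antisymm ?_ (le_natDegree_of_ne_zero (by rw [hcoeff2N]; exact hp2))
    rw [hH2def]
    refine le_trans (natDegree_add_le _ _) ?_
    rw [hd1, hd2]
    simp
  -- conclude H2 = PP * C 2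
  obtain ⟨q, hq⟩ := hdvd
  have hq0 : q ≠ 0 := fun h => hH2ne (by rw [hq, h, mul_zero])
  have hdegq : q.natDegree = 0 := by
    have := natDegree_mul hmonicPP.ne_zero hq0
    rw [← hq, hdegH2, hdegPP] at this
    omega
  have hqC : q = C (q.coeff 0) := eq_C_of_natDegree_eq_zero hdegq
  have hqval : q.coeff 0 = 2 := by
    have h1 : H2.coeff (2*N) = PP.coeff (2*N) * q.coeff 0 := by
      rw [hq, hqC, coeff_mul_C]
      simp
    have h2 : PP.coeff (2*N) = 1 := by
      have := hmonicPP.coeff_natDegree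
      rwa [hdegPP] at this
    rw [h2, one_mul] at h1
    rw [← h1, hcoeff2N]
  have hH2PP : H2 = PP * C 2 := by
    rw [hq, hqC, hqval]
  -- expand
  have hexpG : Polynomial.expand (ZMod p) 2 G
      = ∑ m ∈ Finset.range (N+1), C (((2*N).choose (2*m) : ZMod p)) * X ^ (2*m) := by
    rw [hGdef, map_sum]
    refine Finset.sum_congr rfl fun m hm => ?_
    rw [map_mul, Polynomial.expand_C, map_pow, Polynomial.expand_X, ← pow_mul]
  have hexpP : Polynomial.expand (ZMod p) 2 P = PP := by
    rw [hPdef, hPPdef, map_prod]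
    refine Finset.prod_congr rfl fun t ht => ?_
    rw [map_sub, Polynomial.expand_X, Polynomial.expand_C]
  have hC2 : (C 2 : (ZMod p)[X]) ≠ 0 := fun h => hp2 (by
    have := Polynomial.C_injective (h.trans (map_zero C).symm)
    exact this)
  have hmain : C 2 * Polynomial.expand (ZMod p) 2 G
      = C 2 * Polynomial.expand (ZMod p) 2 P := by
    rw [hexpG, hexpP, ← evenpart (ZMod p) N, ← hH2def, hH2PP, mul_comm]
  exact Polynomial.expand_injective (by norm_num) (mul_left_cancel₀ hC2 hmain)
end
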